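/- Let K be a field of characteristic zero, V a formal power series over K with constant coefficient 0 and coefficient of z equal to 1, U its compositional inverse, and W the formal power series with W · V' = 1. Define the operator Ỹ on formal power series in A by Ỹ f = W · f'. Then for all m, n ≥ 0, the constant coefficient of Ỹ^n(A^m) equals n! times the coefficient of v^n in U(v)^m. -/

import Mathlib

open Polynomial PowerSeries

/-- Composition `g ∘ f` of formal power series, valid when `f` has zero constant term:
the coefficient of `v^n` is `Σ_{k ≤ n} g_k · (coefficient of v^n in f^k)`. -/
noncomputable def psComp {K : Type*} [Field K] (g f : PowerSeries K) : PowerSeries K :=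
  PowerSeries.mk fun n =>
    ∑ k ∈ Finset.range (n + 1), PowerSeries.coeff k g * PowerSeries.coeff n (f ^ k)

/-- The dual vector field `Ỹ f = W · f'` acting on formal power series. -/
noncomputable def Ytilde {K : Type*} [Field K] (W : PowerSeries K) (f : PowerSeries K) :
    PowerSeries K :=
  W * PowerSeries.derivative K f

/-!
Since `U` has zero constant term, `psComp` is Mathlib's substitution `PowerSeries.subst`, so
`V ∘ U = X`; as `V` is invertible for substitution, also `U ∘ V = X`, i.e. `A ^ m = (U ^ m) ∘ V`.
By the chain rule, `W · (g ∘ V)' = g' ∘ V`: conjugation by `V` turns `Ỹ` into `d/dA`.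
Hence `Ỹ^n (A ^ m) = (d/dA)^n (U ^ m) ∘ V`, whose constant term is that of `(d/dA)^n (U ^ m)`,
namely `n! · [v^n] U ^ m`.
-/

namespace PowerSeries

section CommRing

variable {R : Type*} [CommRing R]

theorem coeff_pow_eq_zero_of_lt {f : R⟦X⟧} (hf : constantCoeff f = 0) {n k : ℕ} (h : n < k) :
    coeff n (f ^ k) = 0 :=
  X_pow_dvd_iff.mp (pow_dvd_pow_of_dvd (X_dvd_iff.mpr hf) k) n h

theorem constantCoeff_subst_of_constantCoeff_eq_zero {a : R⟦X⟧} (ha : constantCoeff a = 0)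
    (f : R⟦X⟧) : constantCoeff (subst a f) = constantCoeff f := by
  have hf₀ : constantCoeff (f - C (constantCoeff f)) = 0 := by
    rw [map_sub, constantCoeff_C, sub_self]
  have h := constantCoeff_subst_eq_zero ha _ hf₀
  rwa [subst_sub (HasSubst.of_constantCoeff_zero' ha), subst_C, map_sub, sub_eq_zero] at h

theorem subst_eq_X_of_subst_eq_X {P Q : R⟦X⟧} (hP : constantCoeff P = 0)
    (hQ : constantCoeff Q = 0) (hP₁ : IsUnit (coeff 1 P)) (h : subst Q P = X) :
    subst P Q = X := by
  have hPsubst := HasSubst.of_constantCoeff_zero' hP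
  have hQsubst := HasSubst.of_constantCoeff_zero' hQ
  set Q' := P.substInvOfIsUnit hP₁
  have hQ'P : subst P Q' = X := subst_substInvOfIsUnit_left P hP hP₁
  have hQ' : Q = Q' :=
    calc Q = subst Q (X : R⟦X⟧) := (subst_X hQsubst).symm
      _ = subst Q (subst P Q') := by rw [hQ'P]
      _ = subst (subst Q P) Q' := subst_comp_subst_apply hPsubst hQsubst Q'
      _ = Q' := by rw [h, X_subst]
  rw [hQ', hQ'P]

end CommRing

variable {K : Type*} [Field K]

theorem psComp_eq_subst {f : K⟦X⟧} (hf : constantCoeff f = 0) (g : K⟦X⟧) :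
    psComp g f = subst f g := by
  ext n
  rw [psComp, coeff_mk, coeff_subst' (HasSubst.of_constantCoeff_zero' hf),
    finsum_eq_sum_of_support_subset]
  · rfl
  · intro k hk
    by_contra hkn
    simp only [Finset.coe_range, Set.mem_Iio, not_lt] at hkn
    exact hk (show coeff k g • coeff n (f ^ k) = 0 by
      rw [coeff_pow_eq_zero_of_lt hf (by omega), smul_zero])

theorem Ytilde_subst {V W : K⟦X⟧} (hV : constantCoeff V = 0)
    (hW : W * derivative K V = 1) (g : K⟦X⟧) :
    Ytilde W (subst V g) = subst V (derivative K g) := by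
  rw [Ytilde, derivative_subst (HasSubst.of_constantCoeff_zero' hV), mul_left_comm, hW, mul_one]

theorem Ytilde_iterate_subst {V W : K⟦X⟧} (hV : constantCoeff V = 0)
    (hW : W * derivative K V = 1) (n : ℕ) (g : K⟦X⟧) :
    (Ytilde W)^[n] (subst V g) = subst V ((derivative K)^[n] g) :=
  (Function.Semiconj.iterate_right (fun g => (Ytilde_subst hV hW g).symm) n g).symm

end PowerSeries

theorem dual_vector_field_gives_inverse_powers_general {K : Type*} [Field K]
    (V U W : PowerSeries K)
    (hV0 : PowerSeries.constantCoeff V = 0)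
    (hV1 : PowerSeries.coeff 1 V = 1)
    (hU0 : PowerSeries.constantCoeff U = 0)
    (hUV : psComp V U = PowerSeries.X)
    (hW : W * PowerSeries.derivative K V = 1)
    (m n : ℕ) :
    PowerSeries.constantCoeff ((Ytilde W)^[n] (PowerSeries.X ^ m))
      = (n.factorial : K) * PowerSeries.coeff n (U ^ m) := by
  have hVU : subst V U = PowerSeries.X :=
    subst_eq_X_of_subst_eq_X hV0 hU0 (hV1 ▸ isUnit_one) (psComp_eq_subst hU0 V ▸ hUV)
  have hXm : (PowerSeries.X : K⟦X⟧) ^ m = subst V (U ^ m) := by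
    rw [subst_pow (HasSubst.of_constantCoeff_zero' hV0), hVU]
  rw [hXm, Ytilde_iterate_subst hV0 hW, constantCoeff_subst_of_constantCoeff_eq_zero hV0,
    constantCoeff_iterate_derivative]

theorem dual_vector_field_gives_inverse_powers {K : Type*} [Field K] [CharZero K]
    (V U W : PowerSeries K)
    (hV0 : PowerSeries.constantCoeff V = 0)
    (hV1 : PowerSeries.coeff 1 V = 1)
    (hU0 : PowerSeries.constantCoeff U = 0)
    (hUV : psComp V U = PowerSeries.X)
    (hW : W * PowerSeries.derivative K V = 1)
    (m n : ℕ) :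
    PowerSeries.constantCoeff ((Ytilde W)^[n] (PowerSeries.X ^ m))
      = (n.factorial : K) * PowerSeries.coeff n (U ^ m) :=
  dual_vector_field_gives_inverse_powers_general V U W hV0 hV1 hU0 hUV hW m n
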